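/- arXiv:1309.2050 — 2 statements merged into one kernel-verified Lean document; each statement's English description precedes it below -/
import Mathlib

section
/- Let D and E be d×d matrices over a commutative ring R and L ⊆ R an ideal. Suppose: (1) every entry of D lies in L, (2) the entries of the last column of D lie in L², (3) E has rank at most r in the sense that all (r+1)×(r+1) minors of E vanish, and (4) the entries of the last column of E lie in L. Then det(D + E) ∈ L^{d-r+1}. -/
/-!
After transposing, multilinearity in the rows writes `det (D + E)` as the sum, over sets `s` of
rows, of the determinants of the matrices whose rows in `s` come from `Dᵀ` and the others from
`Eᵀ`. If at least `r + 1` rows come from `Eᵀ`, expanding along the remaining rows reduces the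
determinant to minors of `Eᵀ` of size at least `r + 1`, which vanish. Otherwise `#s ≥ d - r`, and
every Leibniz term takes one factor in `L` from each row of `s` plus one more factor of `L` from
the last row (which lies in `L²` if it comes from `Dᵀ` and in `L` if it comes from `Eᵀ`).
-/

open Matrix Finset

namespace Matrix

variable {R : Type*} [CommRing R]

/-- `B` has determinantal rank `< k`. Minors are taken along arbitrary index maps; non-injective
ones give zero anyway. -/
def MinorsVanish {m n : Type*} (k : ℕ) (B : Matrix m n R) : Prop :=
  ∀ (rr : Fin k → m) (cc : Fin k → n), (B.submatrix rr cc).det = 0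

namespace MinorsVanish

variable {m n : Type*} {k : ℕ} {B : Matrix m n R}

theorem mono (hB : MinorsVanish k B) {l : ℕ} (hkl : k ≤ l) : MinorsVanish l B := by
  induction l, hkl using Nat.le_induction with
  | base => exact hB
  | succ l _ ih =>
    intro rr cc
    rw [det_succ_row_zero]
    refine sum_eq_zero fun j _ => ?_
    rw [submatrix_submatrix, ih, mul_zero]

theorem submatrix (hB : MinorsVanish k B) {m' n' : Type*} (f : m' → m) (g : n' → n) :
    MinorsVanish k (B.submatrix f g) := fun rr cc => by
  rw [submatrix_submatrix]
  exact hB _ _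

theorem transpose (hB : MinorsVanish k B) : MinorsVanish k Bᵀ := fun rr cc => by
  rw [← transpose_submatrix, det_transpose]
  exact hB cc rr

theorem det_eq_zero_of_rows_eq {n : ℕ} {B A : Matrix (Fin n) (Fin n) R} {T : Finset (Fin n)}
    (hB : MinorsVanish k B) (hT : k ≤ #T) (hAB : ∀ i ∈ T, A i = B i) : A.det = 0 := by
  induction n with
  | zero =>
    obtain rfl : k = 0 := by simpa using hT.trans (card_le_univ T)
    simpa using hB id id
  | succ n ih =>
    by_cases hTuniv : T = univ
    · rw [funext fun i => hAB i (hTuniv ▸ mem_univ i), ← submatrix_id_id B]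
      exact hB.mono (by simpa [hTuniv] using hT) id id
    obtain ⟨i₀, hi₀⟩ : ∃ i₀, i₀ ∉ T := by simpa [eq_univ_iff_forall] using hTuniv
    rw [det_succ_row A i₀]
    refine sum_eq_zero fun j _ => ?_
    have hcard : #(T.preimage i₀.succAbove Fin.succAbove_right_injective.injOn) = #T := by
      classical
      rw [card_preimage, filter_true_of_mem fun i hi =>
        Fin.range_succAbove i₀ ▸ ne_of_mem_of_not_mem hi hi₀]
    have hrows : ∀ i ∈ T.preimage i₀.succAbove Fin.succAbove_right_injective.injOn,
        A.submatrix i₀.succAbove j.succAbove i = B.submatrix i₀.succAbove j.succAbove i :=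
      fun i hi => funext fun c => by simp only [submatrix_apply, hAB _ (mem_preimage.1 hi)]
    rw [ih (hB.submatrix i₀.succAbove j.succAbove) (hcard ▸ hT) hrows, mul_zero]

end MinorsVanish

theorem det_mem_prod_of_mem_row {n : Type*} [Fintype n] [DecidableEq n] (A : Matrix n n R)
    (I : n → Ideal R) (hA : ∀ i j, A i j ∈ I i) : A.det ∈ ∏ i, I i := by
  rw [det_apply']
  refine Ideal.sum_mem _ fun σ _ => Ideal.mul_mem_left _ _ ?_
  rw [← Equiv.prod_comp σ I]
  exact Ideal.prod_mem_prod fun i _ => hA (σ i) i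

theorem det_add_eq_sum_det_piecewise {n : Type*} [Fintype n] [DecidableEq n]
    (A B : Matrix n n R) : (A + B).det = ∑ s : Finset n, (of (s.piecewise A B)).det :=
  detRowAlternating.map_add_univ A B

end Matrix

/-- The key determinantal containment: if every entry of `D` lies in an ideal `L`,
the last column of `D` has entries in `L²`, all `(r+1) × (r+1)` minors of `E`
vanish, and the last column of `E` has entries in `L`, then
`det (D + E) ∈ L^(d - r + 1)`. -/
theorem det_add_mem_pow_ideal {R : Type*} [CommRing R] {d r : ℕ} (hrd : r < d)
    (L : Ideal R) (D E : Matrix (Fin d) (Fin d) R)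
    (hD : ∀ i j, D i j ∈ L)
    (hDlast : ∀ i, D i ⟨d - 1, by omega⟩ ∈ L ^ 2)
    (hE : ∀ rr cc : Fin (r + 1) → Fin d, (E.submatrix rr cc).det = 0)
    (hElast : ∀ i, E i ⟨d - 1, by omega⟩ ∈ L) :
    (D + E).det ∈ L ^ (d - r + 1) := by
  classical
  obtain ⟨last, hDlast, hElast⟩ : ∃ last : Fin d, (∀ i, D i last ∈ L ^ 2) ∧ ∀ i, E i last ∈ L :=
    ⟨_, hDlast, hElast⟩
  rw [← det_transpose, transpose_add, det_add_eq_sum_det_piecewise]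
  refine Ideal.sum_mem _ fun s _ => ?_
  by_cases hs : r + 1 ≤ #sᶜ
  · rw [(MinorsVanish.transpose hE).det_eq_zero_of_rows_eq hs
      fun i hi => piecewise_eq_of_notMem _ _ _ (mem_compl.1 hi)]
    exact zero_mem _
  have hrow : ∀ i j, of (s.piecewise Dᵀ Eᵀ) i j ∈
      L ^ ((if i ∈ s then 1 else 0) + if i = last then 1 else 0) := by
    intro i j
    rcases eq_or_ne i last with rfl | hil <;> by_cases his : i ∈ s <;>
      simp [piecewise, *]
  have hdet := det_mem_prod_of_mem_row _ _ hrow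
  rw [prod_pow_eq_pow_sum, sum_add_distrib, sum_boole, sum_ite_eq'] at hdet
  simp only [filter_mem_eq_inter, univ_inter, mem_univ, if_true, Nat.cast_id] at hdet
  refine Ideal.pow_le_pow_right ?_ hdet
  rw [card_compl, Fintype.card_fin] at hs
  omega
end

section
/- Let R be a Noetherian ring, I an ideal containing a nonzerodivisor a, with J = (a) ⊆ I principal, and suppose I^t :_{Q(R)} I^u = I^{t-u} holds in the total ring of quotients for given u ≤ t. Then (J·I^t) :_R I^u ⊆ J·I^{t-u}, i.e., the colon ideal (aI^t : I^u) in R is contained in aI^{t-u}. -/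
/-!
If `r` multiplies `I^u` into `a I^t`, then `q = r / a` multiplies `I^u` into `I^t` inside `Q(R)`,
so by hypothesis `q ∈ I^(t-u)`; since `R → Q(R)` is injective, `r = a q` lies in `a I^(t-u)`.
-/

namespace Ideal

variable {R K : Type*} [CommRing R] [CommRing K] [Algebra R K]

theorem mul_algebraMap_mem_map_of_mem_colon_span_singleton_mul {a r : R} {q : K}
    {J : Ideal R} {N : Set R} (hreg : IsLeftRegular (algebraMap R K a))
    (hq : algebraMap R K r = algebraMap R K a * q)
    (hr : r ∈ (span {a} * J).colon N) :
    ∀ x ∈ N, q * algebraMap R K x ∈ Submodule.map (Algebra.linearMap R K) (J : Submodule R R) := by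
  intro x hx
  obtain ⟨m, hm, hma⟩ := mem_span_singleton_mul.mp (Submodule.mem_colon.mp hr x hx)
  refine ⟨m, hm, hreg ?_⟩
  calc algebraMap R K a * algebraMap R K m = algebraMap R K r * algebraMap R K x := by
        rw [← map_mul, ← map_mul, hma, smul_eq_mul]
    _ = algebraMap R K a * (q * algebraMap R K x) := by rw [hq, mul_assoc]

theorem mem_span_singleton_mul_of_algebraMap_eq {a r : R} {q : K} {J : Ideal R}
    (hinj : Function.Injective (algebraMap R K))
    (hq : algebraMap R K r = algebraMap R K a * q)
    (hqJ : q ∈ Submodule.map (Algebra.linearMap R K) (J : Submodule R R)) :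
    r ∈ span {a} * J := by
  obtain ⟨s, hs, rfl⟩ := hqJ
  exact mem_span_singleton_mul.mpr ⟨s, hs, hinj (by simpa using hq.symm)⟩

end Ideal

theorem colon_ideal_contained_general {R : Type*} [CommRing R]
    (I : Ideal R) (a : R) (hreg : a ∈ nonZeroDivisors R)
    (u t : ℕ)
    (hcolon : {q : FractionRing R | ∀ x ∈ I ^ u, q * algebraMap R (FractionRing R) x ∈
        Submodule.map (Algebra.linearMap R (FractionRing R)) (I ^ t : Submodule R R)}
      = ↑(Submodule.map (Algebra.linearMap R (FractionRing R))
          (I ^ (t - u) : Submodule R R))) :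
    (Ideal.span {a} * I ^ t).colon ((I ^ u : Ideal R) : Set R) ≤ Ideal.span {a} * I ^ (t - u) := by
  intro r hr
  have hunit : IsUnit (algebraMap R (FractionRing R) a) :=
    IsLocalization.map_units (FractionRing R) ⟨a, hreg⟩
  obtain ⟨q, hq⟩ := hunit.dvd (a := algebraMap R (FractionRing R) r)
  have hq_colon : q ∈ {q : FractionRing R | ∀ x ∈ I ^ u, q * algebraMap R (FractionRing R) x ∈
      Submodule.map (Algebra.linearMap R (FractionRing R)) (I ^ t : Submodule R R)} :=
    Ideal.mul_algebraMap_mem_map_of_mem_colon_span_singleton_mul hunit.isRegular.left hq hr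
  rw [hcolon] at hq_colon
  exact Ideal.mem_span_singleton_mul_of_algebraMap_eq (IsFractionRing.injective R _) hq
    hq_colon

/-- If `a ∈ I` is a nonzerodivisor and `I^t :_{Q(R)} I^u = I^(t-u)` in the total
quotient ring, then in `R` the colon ideal satisfies `(a·I^t) :_R I^u ⊆ a·I^(t-u)`. -/
theorem colon_ideal_contained {R : Type*} [CommRing R] [IsNoetherianRing R]
    (I : Ideal R) (a : R) (ha : a ∈ I) (hreg : a ∈ nonZeroDivisors R)
    (u t : ℕ) (hut : u ≤ t)
    (hcolon : {q : FractionRing R | ∀ x ∈ I ^ u, q * algebraMap R (FractionRing R) x ∈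
        Submodule.map (Algebra.linearMap R (FractionRing R)) (I ^ t : Submodule R R)}
      = ↑(Submodule.map (Algebra.linearMap R (FractionRing R))
          (I ^ (t - u) : Submodule R R))) :
    (Ideal.span {a} * I ^ t).colon ((I ^ u : Ideal R) : Set R) ≤ Ideal.span {a} * I ^ (t - u) :=
  colon_ideal_contained_general I a hreg u t hcolon
end
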